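/- If a deterministic filter F is once-appearing-observation (OAO), then two distinct states v and w are compatible if and only if c(v) = c(w); consequently the compatibility relation of F is an equivalence relation and F is neighborhood comparable (NC). -/

import Mathlib

/-- A clique cover of a simple graph: a finite family of cliques covering every vertex. -/
def SimpleGraph.IsCliqueCover {V : Type} (G : SimpleGraph V) (K : Finset (Finset V)) : Prop :=
  (∀ s ∈ K, G.IsClique (s : Set V)) ∧ ∀ v : V, ∃ s ∈ K, v ∈ s

/-- The clique cover number: minimum number of cliques in a clique cover. -/
noncomputable def SimpleGraph.cliqueCoverNum {V : Type} (G : SimpleGraph V) : ℕ :=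
  sInf {n | ∃ K : Finset (Finset V), G.IsCliqueCover K ∧ K.card = n}

/-- The closed neighborhood of a vertex. -/
def SimpleGraph.closedNbhd {V : Type} (G : SimpleGraph V) (v : V) : Set V :=
  {w | w = v ∨ G.Adj v w}

/-- A graph is chordal if every cycle of length at least four has a chord:
an edge of the graph joining two vertices of the cycle that is not an edge of the cycle. -/
def SimpleGraph.Chordal {V : Type} (G : SimpleGraph V) : Prop :=
  ∀ (v : V) (c : G.Walk v v), c.IsCycle → 4 ≤ c.length →
    ∃ x y : V, G.Adj x y ∧ x ∈ c.support ∧ y ∈ c.support ∧ s(x, y) ∉ c.edges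

/-- A deterministic (combinatorial) filter: states `S`, observations `Y`, outputs `C`,
an initial state, a partial transition function and an output function. -/
structure DFilter (S Y C : Type) where
  init : S
  tr : S → Y → Option S
  out : S → C

namespace DFilter

variable {S Y C : Type}

/-- Trace an observation sequence from a state (`none` if it crashes). -/
def run (F : DFilter S Y C) : S → List Y → Option S
  | v, [] => some v
  | v, y :: ys => (F.tr v y).bind fun w => F.run w ys

/-- The extensions of a state: observation sequences traceable from it. -/
def Ext (F : DFilter S Y C) (v : S) : Set (List Y) :=
  {s | (F.run v s).isSome}

/-- The output sequence produced by tracing an observation sequence from a state,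
reading the output at every visited state (starting with the output of the state itself). -/
def outs (F : DFilter S Y C) : S → List Y → Option (List C)
  | v, [] => some [F.out v]
  | v, y :: ys => (F.tr v y).bind fun w => (F.outs w ys).map (F.out v :: ·)

/-- Two states are compatible when the outputs they produce agree on all common extensions. -/
def Compatible (F : DFilter S Y C) (v w : S) : Prop :=
  ∀ s : List Y, s ∈ F.Ext v → s ∈ F.Ext w → F.outs v s = F.outs w s

/-- The compatibility graph: edges join distinct compatible states. -/
def compatGraph (F : DFilter S Y C) : SimpleGraph S where
  Adj v w := v ≠ w ∧ F.Compatible v w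
  symm := by
    constructor
    rintro v w ⟨hne, hc⟩
    exact ⟨hne.symm, fun s hw hv => (hc s hv hw).symm⟩
  loopless := ⟨fun v h => h.1 rfl⟩

/-- A filter is globally language comparable (GLC) when the extension sets of any two
compatible states are comparable under inclusion. -/
def GLC (F : DFilter S Y C) : Prop :=
  ∀ v w : S, F.Compatible v w → F.Ext v ⊆ F.Ext w ∨ F.Ext w ⊆ F.Ext v

/-- A filter is neighborhood comparable (NC) when any two vertices of its compatibility
graph with intersecting closed neighborhoods have comparable closed neighborhoods. -/
def NC (F : DFilter S Y C) : Prop :=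
  ∀ v w : S, (F.compatGraph.closedNbhd v ∩ F.compatGraph.closedNbhd w).Nonempty →
    F.compatGraph.closedNbhd v ⊆ F.compatGraph.closedNbhd w ∨
      F.compatGraph.closedNbhd w ⊆ F.compatGraph.closedNbhd v

/-- The target set of the determinism-enforcing zipper constraint generated by a
set of states `U` and an observation `y`: all `y`-children of members of `U`. -/
def zipTarget (F : DFilter S Y C) (U : Set S) (y : Y) : Set S :=
  {w | ∃ u ∈ U, F.tr u y = some w}

/-- A set of mutually compatible states. -/
def MutuallyCompatible (F : DFilter S Y C) (U : Set S) : Prop :=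
  ∀ u ∈ U, ∀ u' ∈ U, F.Compatible u u'

end DFilter

/-!
Two distinct states of an OAO filter never share a nonempty extension, since its first
observation would label transitions out of both. Hence compatibility of distinct states
only compares the outputs at the states themselves, so compatibility is the kernel of `c`;
the closed neighborhoods of `G_F` are then its equivalence classes, which are comparable
as soon as they meet.
-/

namespace DFilter

variable {S Y C : Type} (F : DFilter S Y C)

/-- Once-appearing-observation filters. -/
def IsOAO : Prop :=
  ∀ (y : Y) (v w : S), (F.tr v y).isSome → (F.tr w y).isSome → v = w

variable {F}

theorem nil_mem_Ext (v : S) : ([] : List Y) ∈ F.Ext v := rfl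

theorem isSome_tr_of_cons_mem_Ext {v : S} {y : Y} {ys : List Y} (h : y :: ys ∈ F.Ext v) :
    (F.tr v y).isSome := by
  simp only [Ext, run, Set.mem_ofPred_eq] at h
  cases hy : F.tr v y <;> simp_all

theorem Compatible.refl (v : S) : F.Compatible v v := fun _ _ _ => rfl

theorem Compatible.out_eq {v w : S} (h : F.Compatible v w) : F.out v = F.out w := by
  simpa [outs] using h [] (nil_mem_Ext v) (nil_mem_Ext w)

theorem compatible_of_out_eq {v w : S}
    (hext : ∀ s ∈ F.Ext v, s ∈ F.Ext w → s = []) (hout : F.out v = F.out w) :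
    F.Compatible v w := by
  intro s hv hw
  obtain rfl := hext s hv hw
  simp [outs, hout]

theorem mem_closedNbhd_compatGraph {v w : S} :
    w ∈ F.compatGraph.closedNbhd v ↔ F.Compatible v w := by
  constructor
  · rintro (rfl | ⟨-, hc⟩)
    exacts [Compatible.refl w, hc]
  · intro hc
    by_cases h : w = v
    · exact Or.inl h
    · exact Or.inr ⟨Ne.symm h, hc⟩

/-- Closed neighborhoods are then compatibility classes, which coincide as soon as they meet. -/
theorem nc_of_equivalence (h : Equivalence F.Compatible) : F.NC := by
  rintro v w ⟨x, hxv, hxw⟩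
  left
  intro z hz
  rw [mem_closedNbhd_compatGraph] at hxv hxw hz ⊢
  exact h.trans hxw (h.trans (h.symm hxv) hz)

namespace IsOAO

theorem eq_nil_of_mem_Ext (hF : F.IsOAO) {v w : S} (hne : v ≠ w) {s : List Y}
    (hv : s ∈ F.Ext v) (hw : s ∈ F.Ext w) : s = [] := by
  cases s with
  | nil => rfl
  | cons y ys =>
    exact absurd (hF y v w (isSome_tr_of_cons_mem_Ext hv) (isSome_tr_of_cons_mem_Ext hw)) hne

theorem compatible_iff (hF : F.IsOAO) (v w : S) : F.Compatible v w ↔ F.out v = F.out w := by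
  refine ⟨Compatible.out_eq, fun hout => ?_⟩
  by_cases hvw : v = w
  · exact hvw ▸ Compatible.refl v
  · exact compatible_of_out_eq (fun _ => hF.eq_nil_of_mem_Ext hvw) hout

theorem equivalence_compatible (hF : F.IsOAO) : Equivalence F.Compatible := by
  have hker : F.Compatible = fun v w => F.out v = F.out w :=
    funext₂ fun v w => propext (hF.compatible_iff v w)
  exact hker ▸ (Setoid.ker F.out).iseqv

end IsOAO

end DFilter

/-- In a once-appearing-observation filter, two distinct states are compatible if and only
if they have the same output; consequently the compatibility relation is an equivalence
relation and the filter is neighborhood comparable. -/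
theorem oao_nc {S Y C : Type} (F : DFilter S Y C)
    (hoao : ∀ (y : Y) (v w : S), (F.tr v y).isSome → (F.tr w y).isSome → v = w) :
    (∀ v w : S, v ≠ w → (F.Compatible v w ↔ F.out v = F.out w)) ∧
      Equivalence F.Compatible ∧ F.NC := by
  have hF : F.IsOAO := hoao
  exact ⟨fun v w _ => hF.compatible_iff v w, hF.equivalence_compatible,
    DFilter.nc_of_equivalence hF.equivalence_compatible⟩
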